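/- For coprime integer pairs (p,q) and (r,s) with |ps − qr| = 1, any coprime pair (a,b) satisfying |as − br| ≤ 1 and |aq − bp| ≤ 1 must satisfy (a,b) = ±(p,q), ±(r,s), or ±(p+r, q+s) or ±(p−r, q−s). -/

import Mathlib

/-! Since `d = ps - qr = ±1`, Cramer's rule writes `(a, b)` as the integer combination
`d (as - br) • (p, q) + d (bp - aq) • (r, s)`, whose two coefficients lie in `{-1, 0, 1}` and
are not both zero because `(a, b)` is primitive. The eight remaining sign patterns are exactly
the eight listed pairs. -/

lemma eq_pm_of_eq_zsmul_add_zsmul {G : Type*} [AddCommGroup G] {x u v : G} {m n : ℤ}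
    (hx : x ≠ 0) (hm : |m| ≤ 1) (hn : |n| ≤ 1) (h : x = m • u + n • v) :
    (x = u ∨ x = -u) ∨ (x = v ∨ x = -v) ∨ (x = u + v ∨ x = -(u + v)) ∨
      (x = u - v ∨ x = -(u - v)) := by
  subst h
  rcases Int.abs_le_one_iff.mp hm with rfl | rfl | rfl <;>
    rcases Int.abs_le_one_iff.mp hn with rfl | rfl | rfl <;>
    simp_all [sub_eq_add_neg, add_comm]

lemma det_smul_eq_zsmul_add_zsmul (p q r s a b : ℤ) :
    (p * s - q * r) • (a, b) = (a * s - b * r) • (p, q) + (b * p - a * q) • (r, s) := by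
  ext <;> simp <;> ring

theorem farey_neighbors_general (p q r s a b : ℤ)
    (hab : IsCoprime a b)
    (h1 : |p * s - q * r| = 1)
    (h2 : |a * s - b * r| ≤ 1) (h3 : |a * q - b * p| ≤ 1) :
    ((a, b) = (p, q) ∨ (a, b) = (-p, -q)) ∨
    ((a, b) = (r, s) ∨ (a, b) = (-r, -s)) ∨
    ((a, b) = (p + r, q + s) ∨ (a, b) = (-(p + r), -(q + s))) ∨
    ((a, b) = (p - r, q - s) ∨ (a, b) = (-(p - r), -(q - s))) := by
  set d := p * s - q * r
  have hd : d * d = 1 := by rw [← abs_mul_abs_self, h1, one_mul]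
  have hx : (a, b) = (d * (a * s - b * r)) • (p, q) + (d * (b * p - a * q)) • (r, s) := by
    rw [mul_smul, mul_smul, ← smul_add, ← det_smul_eq_zsmul_add_zsmul, ← mul_smul, hd, one_smul]
  have hx0 : (a, b) ≠ 0 := by
    rintro ⟨⟩
    exact not_isCoprime_zero_zero hab
  have hm : |d * (a * s - b * r)| ≤ 1 := by rwa [abs_mul, h1, one_mul]
  have hn : |d * (b * p - a * q)| ≤ 1 := by rwa [abs_mul, h1, one_mul, abs_sub_comm]
  simpa only [Prod.neg_mk, Prod.mk_add_mk, Prod.mk_sub_mk] using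
    eq_pm_of_eq_zsmul_add_zsmul hx0 hm hn hx

/-- For coprime integer pairs `(p,q)` and `(r,s)` with `|ps − qr| = 1`, any coprime pair
`(a,b)` with `|as − br| ≤ 1` and `|aq − bp| ≤ 1` equals `±(p,q)`, `±(r,s)`, `±(p+r,q+s)`
or `±(p−r,q−s)`. -/
theorem farey_neighbors (p q r s a b : ℤ)
    (hpq : IsCoprime p q) (hrs : IsCoprime r s) (hab : IsCoprime a b)
    (h1 : |p * s - q * r| = 1)
    (h2 : |a * s - b * r| ≤ 1) (h3 : |a * q - b * p| ≤ 1) :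
    ((a, b) = (p, q) ∨ (a, b) = (-p, -q)) ∨
    ((a, b) = (r, s) ∨ (a, b) = (-r, -s)) ∨
    ((a, b) = (p + r, q + s) ∨ (a, b) = (-(p + r), -(q + s))) ∨
    ((a, b) = (p - r, q - s) ∨ (a, b) = (-(p - r), -(q - s))) :=
  farey_neighbors_general p q r s a b hab h1 h2 h3
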